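/- arXiv:2504.10957 — 4 statements merged into one kernel-verified Lean document; each statement's English description precedes it below -/
import Mathlib

section
/- Let c be a real number with 0 < c ≤ 1 and let q : ℕ → ℝ satisfy q(0) = 0 and q(t+1) = q(t) + c·exp(−q(t)) for all t ∈ ℕ. Then q(t) ≥ 0 for all t, and for every T ∈ ℕ one has log(1 + c·T) ≤ q(T) ≤ log(1 + 2·c·T); in particular q(T) grows as Θ(log T). -/
/-! Put `E t = exp (q t)`. The recursion becomes `E (t+1) = E t * exp (c / E t)`, and since
`1 + x ≤ exp x ≤ 1 + 2x` on `[0, 1]`, each step adds between `c` and `2c` to `E`. Hence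
`1 + c t ≤ E t ≤ 1 + 2 c t`, and taking logarithms gives the bounds on `q`. -/

open Real

-- The chord of `exp` over `[0, 1]` has slope `e - 1 < 2`.
lemma Real.exp_le_one_add_two_mul {x : ℝ} (hx0 : 0 ≤ x) (hx1 : x ≤ 1) :
    exp x ≤ 1 + 2 * x := by
  have hchord := convexOn_exp.2 (Set.mem_univ 0) (Set.mem_univ 1)
    (sub_nonneg.2 hx1) hx0 (sub_add_cancel 1 x)
  simp only [smul_eq_mul, mul_zero, mul_one, zero_add, exp_zero] at hchord
  nlinarith [exp_one_lt_d9]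

lemma add_le_mul_exp_div {E : ℝ} (c : ℝ) (hE : 0 < E) : E + c ≤ E * exp (c / E) := by
  calc E + c = E * (c / E + 1) := by field_simp; ring
    _ ≤ E * exp (c / E) := by gcongr; exact add_one_le_exp _

lemma mul_exp_div_le_add_two_mul {c E : ℝ} (hc : 0 ≤ c) (hcE : c ≤ E) :
    E * exp (c / E) ≤ E + 2 * c := by
  rcases hc.eq_or_lt with rfl | hc
  · simp
  have hE : 0 < E := hc.trans_le hcE
  calc E * exp (c / E) ≤ E * (1 + 2 * (c / E)) := by
        gcongr
        exact exp_le_one_add_two_mul (by positivity) ((div_le_one hE).2 hcE)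
    _ = E + 2 * c := by field_simp

lemma exp_add_mul_exp_neg (x c : ℝ) : exp (x + c * exp (-x)) = exp x * exp (c / exp x) := by
  rw [exp_add, exp_neg, div_eq_mul_inv]

theorem one_add_mul_le_exp_le_one_add_two_mul {c : ℝ} {q : ℕ → ℝ} (hc0 : 0 ≤ c) (hc1 : c ≤ 1)
    (h0 : q 0 = 0)
    (hrec : ∀ t : ℕ, q (t + 1) = q t + c * exp (-(q t))) (t : ℕ) :
    1 + c * t ≤ exp (q t) ∧ exp (q t) ≤ 1 + 2 * c * t := by
  induction t with
  | zero => simp [h0]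
  | succ n ih =>
    obtain ⟨hlo, hhi⟩ := ih
    have hcE : c ≤ exp (q n) := by nlinarith [(Nat.cast_nonneg n : (0 : ℝ) ≤ n)]
    rw [hrec, exp_add_mul_exp_neg]
    push_cast
    constructor
    · linarith [add_le_mul_exp_div c (exp_pos (q n))]
    · linarith [mul_exp_div_le_add_two_mul hc0 hcE]

/-- growth of the attention-score recursion `q(t+1) = q(t) + c·exp(−q(t))`
with `q(0) = 0` and `0 < c ≤ 1`: `q` stays nonnegative and
`log(1 + c·T) ≤ q(T) ≤ log(1 + 2·c·T)`, i.e. `q(T) = Θ(log T)`. -/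
theorem attention_score_log_growth (c : ℝ) (hc0 : 0 < c) (hc1 : c ≤ 1)
    (q : ℕ → ℝ) (h0 : q 0 = 0)
    (hrec : ∀ t : ℕ, q (t + 1) = q t + c * Real.exp (-(q t))) :
    (∀ t : ℕ, 0 ≤ q t) ∧
      ∀ T : ℕ, Real.log (1 + c * T) ≤ q T ∧ q T ≤ Real.log (1 + 2 * c * T) := by
  have hlog (T : ℕ) : log (1 + c * T) ≤ q T ∧ q T ≤ log (1 + 2 * c * T) := by
    obtain ⟨hlo, hhi⟩ := one_add_mul_le_exp_le_one_add_two_mul hc0.le hc1 h0 hrec T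
    exact ⟨(log_le_iff_le_exp (by positivity)).2 hlo, (le_log_iff_exp_le (by positivity)).2 hhi⟩
  refine ⟨fun t => le_trans ?_ (hlog t).1, hlog⟩
  exact log_nonneg (le_add_of_nonneg_right (by positivity))
end

section
/- Let V be a finite nonempty set, γ : V → ℝ not identically zero, and c > 0. Then there exist real numbers (λᵢ)_{i∈V} with Σ_{i∈V} λᵢγᵢ ≥ 1 + c and Σ_{i∈V} λᵢγᵢ² ≥ 1 + c if and only if it is NOT the case that there exists k < 0 with γᵢ ∈ {0, k} for every i ∈ V. -/
private lemma sum_one_support {V : Type*} [Fintype V] [DecidableEq V] (i : V) (x : ℝ) (f : V → ℝ) :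
    ∑ m, (if m = i then x else 0) * f m = x * f i := by
  rw [Finset.sum_eq_single i]
  · simp
  · intro b _ hb; simp [hb]
  · intro h; exact absurd (Finset.mem_univ i) h

private lemma sum_two_support {V : Type*} [Fintype V] [DecidableEq V] {i j : V} (hij : i ≠ j)
    (x y : ℝ) (f : V → ℝ) :
    ∑ m, (if m = i then x else if m = j then y else 0) * f m = x * f i + y * f j := by
  have : ∀ m ∈ Finset.univ, (if m = i then x else if m = j then y else 0) * f m
      = (if m = i then x * f i else 0) + (if m = j then y * f j else 0) := by
    intro m _
    by_cases h1 : m = i <;> by_cases h2 : m = j <;> simp_all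
  rw [Finset.sum_congr rfl this, Finset.sum_add_distrib]
  simp [Finset.sum_ite_eq']

/-- for a not-identically-zero `γ` and margin `c > 0`, coefficients
`λᵢ` with `∑λᵢγᵢ ≥ 1 + c` and `∑λᵢγᵢ² ≥ 1 + c` exist iff it is not the case that
all `γᵢ ∈ {0, k}` for some fixed `k < 0`. -/
theorem exists_task_arithmetic_coefficients_iff {V : Type*} [Fintype V] [Nonempty V]
    (γ : V → ℝ) (hγ : ∃ i, γ i ≠ 0) (c : ℝ) (hc : 0 < c) :
    (∃ lam : V → ℝ,
        1 + c ≤ ∑ i, lam i * γ i ∧ 1 + c ≤ ∑ i, lam i * γ i ^ 2) ↔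
      ¬ ∃ k : ℝ, k < 0 ∧ ∀ i, γ i = 0 ∨ γ i = k := by
  classical
  constructor
  · rintro ⟨lam, h1, h2⟩ ⟨k, hk, hall⟩
    have key : ∑ i, lam i * γ i ^ 2 = k * ∑ i, lam i * γ i := by
      rw [Finset.mul_sum]
      refine Finset.sum_congr rfl fun i _ => ?_
      rcases hall i with h | h <;> rw [h] <;> ring
    have hT : 0 < ∑ i, lam i * γ i := by linarith
    have : k * ∑ i, lam i * γ i < 0 := mul_neg_of_neg_of_pos hk hT
    linarith [key ▸ h2]
  · intro h
    by_cases hpos : ∃ i, 0 < γ i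
    · obtain ⟨i, hi⟩ := hpos
      refine ⟨fun m => if m = i then (1 + c) * (1 / γ i + 1 / γ i ^ 2) else 0, ?_, ?_⟩
      · rw [sum_one_support]
        have : (1 + c) * (1 / γ i + 1 / γ i ^ 2) * γ i = (1 + c) * (1 + 1 / γ i) := by
          field_simp
        rw [this]
        nlinarith [one_div_pos.mpr hi]
      · rw [sum_one_support]
        have : (1 + c) * (1 / γ i + 1 / γ i ^ 2) * γ i ^ 2 = (1 + c) * (γ i + 1) := by
          field_simp
        rw [this]
        nlinarith
    · push_neg at hpos
      obtain ⟨i, hi⟩ := hγ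
      have ha : γ i < 0 := lt_of_le_of_ne (hpos i) hi
      push_neg at h
      obtain ⟨j, hj⟩ := h (γ i) ha
      obtain ⟨hj0, hjne⟩ := hj
      have hb : γ j < 0 := lt_of_le_of_ne (hpos j) hj0
      have hij : i ≠ j := fun e => hjne (by rw [e])
      set a := γ i with hA
      set b := γ j with hB
      have hab : b - a ≠ 0 := sub_ne_zero.mpr (fun e => hjne e)
      set t := 1 + c with ht
      refine ⟨fun m => if m = i then t * (b - 1) / (a * (b - a))
        else if m = j then t * (1 - a) / (b * (b - a)) else 0, ?_, ?_⟩
      · rw [sum_two_support hij]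
        have : t * (b - 1) / (a * (b - a)) * a + t * (1 - a) / (b * (b - a)) * b = t := by
          field_simp
          ring
        rw [this]
      · rw [sum_two_support hij]
        have : t * (b - 1) / (a * (b - a)) * a ^ 2 + t * (1 - a) / (b * (b - a)) * b ^ 2
            = t := by
          field_simp
          ring
        rw [this]
end

section
/- Fix integers d, P ≥ 1, m ≥ 2 even, and M ≥ 1. Let μ ∈ ℝ^d be a unit vector and v₁, …, v_M ∈ ℝ^d unit vectors each orthogonal to μ. Let X ∈ ℝ^{d×P} have s₁ columns equal to μ, s₂ columns equal to −μ, and its remaining P − s₁ − s₂ columns taken from {v₁, …, v_M}. Let a ∈ ℝ^m have exactly m/2 entries equal to 1/√m and m/2 entries equal to −1/√m, let θ > 0 and q ≥ 0, let V ∈ ℝ^{m×d} have i-th row equal to sign(aᵢ)·θ·μᵀ, and let W := q·μμᵀ. Then the one-layer Transformer output satisfies exactly f(X; a, V, W) = (θ·√m/(2P))·[ s₁·A₊ + s₂·A₋ + (P − s₁ − s₂)·(s₁ − s₂)/P ], where A₊ = (s₁·e^{q} − s₂·e^{−q})/(s₁·e^{q} + s₂·e^{−q} + P − s₁ − s₂)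 and A₋ = (s₁·e^{−q} − s₂·e^{q})/(s₁·e^{−q} + s₂·e^{q} + P − s₁ − s₂). -/
open Matrix

/-- The `s`-th column of `X ∈ ℝ^{d×P}` as a vector. -/
def colVec {d P : ℕ} (X : Matrix (Fin d) (Fin P) ℝ) (s : Fin P) : Fin d → ℝ :=
  fun k => X k s

/-- Softmax attention weight of key token `s` for query token `l`:
`softmax_l(x_sᵀWx_l) = exp(x_sᵀWx_l) / ∑_r exp(x_rᵀWx_l)`. -/
noncomputable def attnWeight {d P : ℕ} (X : Matrix (Fin d) (Fin P) ℝ)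
    (W : Matrix (Fin d) (Fin d) ℝ) (s l : Fin P) : ℝ :=
  Real.exp (colVec X s ⬝ᵥ (W *ᵥ colVec X l)) /
    ∑ r : Fin P, Real.exp (colVec X r ⬝ᵥ (W *ᵥ colVec X l))

/-- One-layer single-head Transformer:
`f(X; a, V, W) = (1/P)·∑_l aᵀ·ReLU(V·∑_s x_s·softmax_l(x_sᵀWx_l))`. -/
noncomputable def transformer {d P m : ℕ} (a : Fin m → ℝ)
    (V : Matrix (Fin m) (Fin d) ℝ) (W : Matrix (Fin d) (Fin d) ℝ)
    (X : Matrix (Fin d) (Fin P) ℝ) : ℝ :=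
  (1 / (P : ℝ)) * ∑ l : Fin P, ∑ i : Fin m,
    a i * max ((V *ᵥ ∑ s : Fin P, attnWeight X W s l • colVec X s) i) 0

/-!
With `W = q μμᵀ` the attention score of key `s` for query `l` is `q cₛ c_l`, where
`c = μᵀx ∈ {1, -1, 0}` on label-relevant, confusion and irrelevant tokens. Every MLP row is
`±θμᵀ` with the sign of its output weight, so for balanced output weights
`∑ᵢ aᵢ ReLU(sign(aᵢ) T) = (√m / 2) (ReLU T - ReLU (-T)) = (√m / 2) T`: the network is linear in
the `μ`-component of the attention output. That component depends on the query only through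
`c_l`, and every sum over tokens splits into the three classes `c = 1, -1, 0`.
-/

open Finset Real

lemma mul_max_sign_mul_zero (a T : ℝ) :
    a * max (Real.sign a * T) 0 = max a 0 * max T 0 - max (-a) 0 * max (-T) 0 := by
  rcases lt_trichotomy a 0 with ha | rfl | ha
  · simp [Real.sign_of_neg ha, ha.le]
  · simp
  · simp [Real.sign_of_pos ha, ha.le]

lemma sum_mul_max_sign_mul_zero {ι : Type*} [Fintype ι] {a : ι → ℝ} {κ : ℝ}
    (hpos : ∑ i, max (a i) 0 = κ) (hneg : ∑ i, max (-a i) 0 = κ) (T : ℝ) :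
    ∑ i, a i * max (Real.sign (a i) * T) 0 = κ * T := by
  simp only [mul_max_sign_mul_zero, sum_sub_distrib, ← sum_mul, hpos, hneg, ← mul_sub,
    max_zero_sub_max_neg_zero_eq_self]

lemma sum_max_zero_of_balanced {m : ℕ} (hme : Even m) {a : Fin m → ℝ} {A : Finset (Fin m)}
    (hA : #A = m / 2) (haA : ∀ i ∈ A, a i = 1 / √m) (haA' : ∀ i ∉ A, a i = -(1 / √m)) :
    ∑ i, max (a i) 0 = √m / 2 ∧ ∑ i, max (-a i) 0 = √m / 2 := by
  have hAc : #Aᶜ = m / 2 := by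
    rw [card_compl, hA, Fintype.card_fin]
    obtain ⟨r, rfl⟩ := hme
    omega
  have hhalf : ((m / 2 : ℕ) : ℝ) * (1 / √m) = √m / 2 := by
    rw [Nat.cast_div_charZero hme.two_dvd, Nat.cast_ofNat,
      show (m : ℝ) / 2 * (1 / √m) = m / √m / 2 by ring, Real.div_sqrt]
  have hpos : ∀ i, max (a i) 0 = if i ∈ A then 1 / √m else 0 := fun i => by
    by_cases hi : i ∈ A
    · simp [hi, haA i hi]
    · simp [hi, haA' i hi]
  have hneg : ∀ i, max (-a i) 0 = if i ∈ Aᶜ then 1 / √m else 0 := fun i => by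
    by_cases hi : i ∈ A
    · simp [hi, haA i hi]
    · simp [hi, haA' i hi]
  simp only [hpos, hneg, sum_ite_mem, univ_inter, sum_const, nsmul_eq_mul, hA, hAc, hhalf,
    and_self]

lemma sum_comp_eq_of_ternary {ι : Type*} [Fintype ι] {S₁ S₂ : Finset ι} (hdisj : Disjoint S₁ S₂)
    {c : ι → ℝ} (h₁ : ∀ i ∈ S₁, c i = 1) (h₂ : ∀ i ∈ S₂, c i = -1)
    (h₀ : ∀ i, i ∉ S₁ → i ∉ S₂ → c i = 0) (φ : ℝ → ℝ) :
    ∑ i, φ (c i) =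
      #S₁ * φ 1 + #S₂ * φ (-1) + ((Fintype.card ι : ℝ) - #S₁ - #S₂) * φ 0 := by
  classical
  have hcard : #S₁ + #S₂ ≤ Fintype.card ι := card_union_of_disjoint hdisj ▸ card_le_univ _
  have hrest : ∀ i ∈ (S₁ ∪ S₂)ᶜ, φ (c i) = φ 0 := fun i hi => by
    rw [mem_compl, mem_union, not_or] at hi
    rw [h₀ i hi.1 hi.2]
  rw [← sum_add_sum_compl (S₁ ∪ S₂), sum_union hdisj,
    sum_eq_card_nsmul fun i hi => congrArg φ (h₁ i hi),
    sum_eq_card_nsmul fun i hi => congrArg φ (h₂ i hi), sum_eq_card_nsmul hrest,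
    card_compl, card_union_of_disjoint hdisj]
  simp only [nsmul_eq_mul, Nat.cast_sub hcard, Nat.cast_add]
  ring

lemma dotProduct_smul_vecMulVec_mulVec {n : Type*} [Fintype n] (q : ℝ) (μ x y : n → ℝ) :
    x ⬝ᵥ ((q • vecMulVec μ μ) *ᵥ y) = q * ((μ ⬝ᵥ x) * (μ ⬝ᵥ y)) := by
  rw [smul_mulVec, vecMulVec_mulVec, op_smul_eq_smul, dotProduct_smul, dotProduct_smul,
    dotProduct_comm x μ, smul_eq_mul, smul_eq_mul]
  ring

/-- The `μ`-component of the attention output, for `W = q • μμᵀ`, at a query token with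
`μ`-component `t`, when the tokens have `μ`-components `c`. -/
noncomputable def rankOneAttnOutput {P : ℕ} (q : ℝ) (c : Fin P → ℝ) (t : ℝ) : ℝ :=
  (∑ s, exp (q * (c s * t)) * c s) / ∑ r, exp (q * (c r * t))

lemma dotProduct_sum_attnWeight_smul_colVec {d P : ℕ} (X : Matrix (Fin d) (Fin P) ℝ) (q : ℝ)
    (μ : Fin d → ℝ) (l : Fin P) :
    μ ⬝ᵥ ∑ s, attnWeight X (q • vecMulVec μ μ) s l • colVec X s =
      rankOneAttnOutput q (fun s => μ ⬝ᵥ colVec X s) (μ ⬝ᵥ colVec X l) := by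
  simp only [dotProduct_sum, dotProduct_smul, smul_eq_mul, attnWeight,
    dotProduct_smul_vecMulVec_mulVec, rankOneAttnOutput, sum_div, div_mul_eq_mul_div]

lemma transformer_smul_vecMulVec {d P m : ℕ} {a : Fin m → ℝ} {κ : ℝ}
    (hpos : ∑ i, max (a i) 0 = κ) (hneg : ∑ i, max (-a i) 0 = κ) {θ : ℝ} {μ : Fin d → ℝ}
    {V : Matrix (Fin m) (Fin d) ℝ} (hV : ∀ i k, V i k = Real.sign (a i) * θ * μ k) (q : ℝ)
    (X : Matrix (Fin d) (Fin P) ℝ) :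
    transformer a V (q • vecMulVec μ μ) X =
      κ * θ / P * ∑ l, rankOneAttnOutput q (fun s => μ ⬝ᵥ colVec X s) (μ ⬝ᵥ colVec X l) := by
  have hVh : ∀ h i, (V *ᵥ h) i = Real.sign (a i) * (θ * (μ ⬝ᵥ h)) := fun h i => by
    simp only [mulVec, dotProduct, hV, mul_assoc, mul_sum]
  simp only [transformer, hVh, sum_mul_max_sign_mul_zero hpos hneg,
    dotProduct_sum_attnWeight_smul_colVec, mul_sum]
  exact sum_congr rfl fun l _ => by ring

lemma rankOneAttnOutput_of_ternary {P : ℕ} {S₁ S₂ : Finset (Fin P)} (hdisj : Disjoint S₁ S₂)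
    {c : Fin P → ℝ} (h₁ : ∀ i ∈ S₁, c i = 1) (h₂ : ∀ i ∈ S₂, c i = -1)
    (h₀ : ∀ i, i ∉ S₁ → i ∉ S₂ → c i = 0) (q t : ℝ) :
    rankOneAttnOutput q c t =
      (#S₁ * exp (q * t) - #S₂ * exp (-(q * t))) /
        (#S₁ * exp (q * t) + #S₂ * exp (-(q * t)) + ((P : ℝ) - #S₁ - #S₂)) := by
  have hnum := sum_comp_eq_of_ternary hdisj h₁ h₂ h₀ fun u => exp (q * (u * t)) * u
  have hden := sum_comp_eq_of_ternary hdisj h₁ h₂ h₀ fun u => exp (q * (u * t))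
  simp only [Fintype.card_fin] at hnum hden
  rw [rankOneAttnOutput, hnum, hden]
  simp only [one_mul, neg_one_mul, mul_neg, mul_one, mul_zero, zero_mul, exp_zero]
  ring

theorem transformer_output_single_task_general {d P m M : ℕ}
    (hme : Even m)
    (μ : Fin d → ℝ) (hμ : μ ⬝ᵥ μ = 1)
    (v : Fin M → Fin d → ℝ) (hvμ : ∀ k, μ ⬝ᵥ v k = 0)
    (s₁ s₂ : ℕ) (S₁ S₂ : Finset (Fin P)) (hdisj : Disjoint S₁ S₂)
    (hS₁ : S₁.card = s₁) (hS₂ : S₂.card = s₂)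
    (X : Matrix (Fin d) (Fin P) ℝ)
    (hX₁ : ∀ l ∈ S₁, colVec X l = μ)
    (hX₂ : ∀ l ∈ S₂, colVec X l = -μ)
    (hX₃ : ∀ l : Fin P, l ∉ S₁ → l ∉ S₂ → ∃ k : Fin M, colVec X l = v k)
    (a : Fin m → ℝ) (A : Finset (Fin m)) (hA : A.card = m / 2)
    (haA : ∀ i ∈ A, a i = 1 / Real.sqrt m)
    (haA' : ∀ i ∉ A, a i = -(1 / Real.sqrt m))
    (θ : ℝ) (q : ℝ)
    (V : Matrix (Fin m) (Fin d) ℝ)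
    (hV : ∀ i k, V i k = Real.sign (a i) * θ * μ k)
    (W : Matrix (Fin d) (Fin d) ℝ) (hW : W = q • vecMulVec μ μ) :
    transformer a V W X =
      (θ * Real.sqrt m / (2 * (P : ℝ))) *
        ((s₁ : ℝ) *
            (((s₁ : ℝ) * Real.exp q - (s₂ : ℝ) * Real.exp (-q)) /
              ((s₁ : ℝ) * Real.exp q + (s₂ : ℝ) * Real.exp (-q)
                + ((P : ℝ) - (s₁ : ℝ) - (s₂ : ℝ)))) +
         (s₂ : ℝ) *
            (((s₁ : ℝ) * Real.exp (-q) - (s₂ : ℝ) * Real.exp q) /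
              ((s₁ : ℝ) * Real.exp (-q) + (s₂ : ℝ) * Real.exp q
                + ((P : ℝ) - (s₁ : ℝ) - (s₂ : ℝ)))) +
         ((P : ℝ) - (s₁ : ℝ) - (s₂ : ℝ)) * ((s₁ : ℝ) - (s₂ : ℝ)) / (P : ℝ)) := by
  set c : Fin P → ℝ := fun l => μ ⬝ᵥ colVec X l
  have hc₁ : ∀ l ∈ S₁, c l = 1 := fun l hl => by simp only [c, hX₁ l hl, hμ]
  have hc₂ : ∀ l ∈ S₂, c l = -1 := fun l hl => by simp only [c, hX₂ l hl, dotProduct_neg, hμ]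
  have hc₀ : ∀ l, l ∉ S₁ → l ∉ S₂ → c l = 0 := fun l h₁ h₂ => by
    obtain ⟨k, hk⟩ := hX₃ l h₁ h₂
    simp only [c, hk, hvμ k]
  obtain ⟨hpos, hneg⟩ := sum_max_zero_of_balanced hme hA haA haA'
  have hout := rankOneAttnOutput_of_ternary hdisj hc₁ hc₂ hc₀ q
  rw [hW, transformer_smul_vecMulVec hpos hneg hV, sum_comp_eq_of_ternary hdisj hc₁ hc₂ hc₀,
    hout, hout, hout]
  simp only [Fintype.card_fin, hS₁, hS₂, mul_one, mul_neg, mul_zero, neg_neg, neg_zero, exp_zero]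
  rw [show (s₁ : ℝ) + s₂ + (P - s₁ - s₂) = P by ring]
  ring

/-- exact output of the idealized fine-tuned model (rank-one
attention `W = q·μμᵀ`, MLP rows `sign(aᵢ)·θ·μᵀ`, balanced `±1/√m` output
weights) on an input with `s₁` columns `μ`, `s₂` columns `−μ`, and the rest
task-irrelevant tokens. -/
theorem transformer_output_single_task {d P m M : ℕ}
    (hd : 1 ≤ d) (hP : 1 ≤ P) (hm : 2 ≤ m) (hme : Even m) (hM : 1 ≤ M)
    (μ : Fin d → ℝ) (hμ : μ ⬝ᵥ μ = 1)
    (v : Fin M → Fin d → ℝ) (hv : ∀ k, v k ⬝ᵥ v k = 1) (hvμ : ∀ k, μ ⬝ᵥ v k = 0)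
    (s₁ s₂ : ℕ) (S₁ S₂ : Finset (Fin P)) (hdisj : Disjoint S₁ S₂)
    (hS₁ : S₁.card = s₁) (hS₂ : S₂.card = s₂)
    (X : Matrix (Fin d) (Fin P) ℝ)
    (hX₁ : ∀ l ∈ S₁, colVec X l = μ)
    (hX₂ : ∀ l ∈ S₂, colVec X l = -μ)
    (hX₃ : ∀ l : Fin P, l ∉ S₁ → l ∉ S₂ → ∃ k : Fin M, colVec X l = v k)
    (a : Fin m → ℝ) (A : Finset (Fin m)) (hA : A.card = m / 2)
    (haA : ∀ i ∈ A, a i = 1 / Real.sqrt m)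
    (haA' : ∀ i ∉ A, a i = -(1 / Real.sqrt m))
    (θ : ℝ) (hθ : 0 < θ) (q : ℝ) (hq : 0 ≤ q)
    (V : Matrix (Fin m) (Fin d) ℝ)
    (hV : ∀ i k, V i k = Real.sign (a i) * θ * μ k)
    (W : Matrix (Fin d) (Fin d) ℝ) (hW : W = q • vecMulVec μ μ) :
    transformer a V W X =
      (θ * Real.sqrt m / (2 * (P : ℝ))) *
        ((s₁ : ℝ) *
            (((s₁ : ℝ) * Real.exp q - (s₂ : ℝ) * Real.exp (-q)) /
              ((s₁ : ℝ) * Real.exp q + (s₂ : ℝ) * Real.exp (-q)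
                + ((P : ℝ) - (s₁ : ℝ) - (s₂ : ℝ)))) +
         (s₂ : ℝ) *
            (((s₁ : ℝ) * Real.exp (-q) - (s₂ : ℝ) * Real.exp q) /
              ((s₁ : ℝ) * Real.exp (-q) + (s₂ : ℝ) * Real.exp q
                + ((P : ℝ) - (s₁ : ℝ) - (s₂ : ℝ)))) +
         ((P : ℝ) - (s₁ : ℝ) - (s₂ : ℝ)) * ((s₁ : ℝ) - (s₂ : ℝ)) / (P : ℝ)) :=
  transformer_output_single_task_general hme μ hμ v hvμ s₁ s₂ S₁ S₂ hdisj hS₁ hS₂ X hX₁ hX₂ hX₃ a A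
    hA haA haA' θ q V hV W hW
end

section
/- Fix integers d, P ≥ 1, m ≥ 2 even, and M ≥ 1. Let μ₁, μ₂ ∈ ℝ^d be unit vectors with μ₁ᵀμ₂ = α, and let v₁, …, v_M ∈ ℝ^d be unit vectors orthogonal to both μ₁ and μ₂. Let X ∈ ℝ^{d×P} have s₁ columns equal to μ₁, s₂ columns equal to −μ₁, and its remaining P − s₁ − s₂ columns taken from {v₁, …, v_M}. Let a ∈ ℝ^m have exactly m/2 entries equal to 1/√m and m/2 entries equal to −1/√m, let θ > 0, q ≥ 0 and λ ∈ ℝ, let V ∈ ℝ^{m×d} have i-th row equal to sign(aᵢ)·θ·(μ₁ + λμ₂)ᵀ, and let W := q·(μ₁μ₁ᵀ + λ·μ₂μ₂ᵀ). Then, setting Q := q·(1 + λα²), the one-layer Transformer output satisfies exactly f(X; a, V, W) = ((1 + λα)·θ·√m/(2P))·[ s₁·A₊(Q) + s₂·A₋(Q) + (P − s₁ − s₂)·(s₁ − s₂)/P ], where A₊(Q) = (s₁·e^{Q} − s₂·e^{−Q})/(s₁·e^{Q} + s₂·e^{−Q} + P − s₁ − s₂) and A₋(Q) = (s₁·e^{−Q}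 − s₂·e^{Q})/(s₁·e^{−Q} + s₂·e^{Q} + P − s₁ − s₂). -/
/-!
Every token is `+μ₁`, `-μ₁` or orthogonal to `μ₁` and `μ₂`, so both `μ₁ ⬝ᵥ xₛ` and `μ₂ ⬝ᵥ xₛ`
are multiples of the label `gₛ ∈ {1, -1, 0}` (with factors `1` and `α`). Hence the attention score
of key `s` for query `l` is `Q·gₛ·gₗ` with `Q = q(1 + λα²)`, the value read by every neuron is
`±θ(1 + λα)` times the softmax mean of the labels, and the balanced signs of `a` turn the ReLU
layer into the identity scaled by `√m / 2`. Every sum over tokens then depends only on the labels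
and is evaluated by counting the three label classes.
-/

open Matrix

open Finset Real

section SignedIndicator

variable {ι : Type*} [DecidableEq ι]

def signedIndicator (S₁ S₂ : Finset ι) (r : ι) : ℝ :=
  if r ∈ S₁ then 1 else if r ∈ S₂ then -1 else 0

lemma dotProduct_eq_mul_signedIndicator {κ : Type*} [Fintype κ] {S₁ S₂ : Finset ι}
    {x : ι → κ → ℝ} {μ ν : κ → ℝ} (h₁ : ∀ s ∈ S₁, x s = μ) (h₂ : ∀ s ∈ S₂, x s = -μ)
    (h₀ : ∀ s, s ∉ S₁ → s ∉ S₂ → ν ⬝ᵥ x s = 0) (s : ι) :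
    ν ⬝ᵥ x s = (ν ⬝ᵥ μ) * signedIndicator S₁ S₂ s := by
  unfold signedIndicator
  split_ifs with hs₁ hs₂
  · rw [h₁ s hs₁, mul_one]
  · rw [h₂ s hs₂, dotProduct_neg, mul_neg_one]
  · rw [h₀ s hs₁ hs₂, mul_zero]

lemma sum_comp_signedIndicator [Fintype ι] {S₁ S₂ : Finset ι} (hdisj : Disjoint S₁ S₂)
    (F : ℝ → ℝ) :
    ∑ r, F (signedIndicator S₁ S₂ r) =
      #S₁ * F 1 + #S₂ * F (-1) + ((Fintype.card ι : ℝ) - #S₁ - #S₂) * F 0 := by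
  have h₁ : ∀ r ∈ S₁, F (signedIndicator S₁ S₂ r) = F 1 := fun r hr => by
    simp [signedIndicator, hr]
  have h₂ : ∀ r ∈ S₂, F (signedIndicator S₁ S₂ r) = F (-1) := fun r hr => by
    simp [signedIndicator, hr, disjoint_right.mp hdisj hr]
  have h₀ : ∀ r ∈ (S₁ ∪ S₂)ᶜ, F (signedIndicator S₁ S₂ r) = F 0 := fun r hr => by
    rw [mem_compl, mem_union, not_or] at hr
    simp [signedIndicator, hr.1, hr.2]
  have hcard : (#(S₁ ∪ S₂)ᶜ : ℝ) = Fintype.card ι - #S₁ - #S₂ := by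
    rw [card_compl, Nat.cast_sub (card_le_univ _), card_union_of_disjoint hdisj]
    push_cast
    ring
  rw [← sum_add_sum_compl (S₁ ∪ S₂), sum_union hdisj, sum_congr rfl h₁, sum_congr rfl h₂,
    sum_congr rfl h₀]
  simp only [sum_const, nsmul_eq_mul, hcard]

end SignedIndicator

/-- Closed form of `∑ₛ softmax(Q gₛ t)ₛ · gₛ` when `n₁` of the `n` labels `gₛ` are `1`,
`n₂` are `-1` and the others `0`. -/
noncomputable def softmaxMeanLabel (n₁ n₂ n Q t : ℝ) : ℝ :=
  (n₁ * exp (Q * t) - n₂ * exp (-(Q * t))) /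
    (n₁ * exp (Q * t) + n₂ * exp (-(Q * t)) + (n - n₁ - n₂))

lemma softmaxMeanLabel_zero (n₁ n₂ n Q : ℝ) :
    softmaxMeanLabel n₁ n₂ n Q 0 = (n₁ - n₂) / n := by
  simp only [softmaxMeanLabel, mul_zero, neg_zero, exp_zero, mul_one]
  ring_nf

lemma sum_exp_mul_signedIndicator_div {ι : Type*} [Fintype ι] [DecidableEq ι]
    {S₁ S₂ : Finset ι} (hdisj : Disjoint S₁ S₂) (Q t : ℝ) :
    (∑ s, exp (Q * (signedIndicator S₁ S₂ s * t)) * signedIndicator S₁ S₂ s) /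
        ∑ r, exp (Q * (signedIndicator S₁ S₂ r * t)) =
      softmaxMeanLabel #S₁ #S₂ (Fintype.card ι) Q t := by
  rw [sum_comp_signedIndicator hdisj (fun g => exp (Q * (g * t)) * g),
    sum_comp_signedIndicator hdisj (fun g => exp (Q * (g * t)))]
  simp only [softmaxMeanLabel, one_mul, neg_one_mul, mul_neg, mul_one, zero_mul, mul_zero,
    exp_zero]
  ring_nf

lemma dotProduct_sum_attnWeight_smul {d P : ℕ} {X : Matrix (Fin d) (Fin P) ℝ}
    {W : Matrix (Fin d) (Fin d) ℝ} {S₁ S₂ : Finset (Fin P)} (hdisj : Disjoint S₁ S₂) {Q : ℝ}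
    (hscore : ∀ s l, colVec X s ⬝ᵥ (W *ᵥ colVec X l) =
      Q * (signedIndicator S₁ S₂ s * signedIndicator S₁ S₂ l))
    {ν : Fin d → ℝ} {c : ℝ} (hν : ∀ s, ν ⬝ᵥ colVec X s = c * signedIndicator S₁ S₂ s)
    (l : Fin P) :
    ν ⬝ᵥ ∑ s, attnWeight X W s l • colVec X s =
      c * softmaxMeanLabel #S₁ #S₂ P Q (signedIndicator S₁ S₂ l) := by
  simp only [dotProduct_sum, dotProduct_smul, hν, smul_eq_mul, mul_left_comm _ c, ← mul_sum,
    attnWeight, hscore, div_mul_eq_mul_div, ← sum_div]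
  rw [sum_exp_mul_signedIndicator_div hdisj, Fintype.card_fin]

lemma mulVec_eq_of_apply_eq_mul {ι κ : Type*} [Fintype κ] {V : Matrix ι κ ℝ} {b : ι → ℝ}
    {ν : κ → ℝ} (hV : ∀ i k, V i k = b i * ν k) (u : κ → ℝ) :
    V *ᵥ u = fun i => b i * (ν ⬝ᵥ u) := by
  ext i
  simp only [mulVec, dotProduct, hV, mul_assoc, ← mul_sum]

lemma dotProduct_smul_add_vecMulVec_mulVec {κ : Type*} [Fintype κ] (μ₁ μ₂ x y : κ → ℝ)
    (q lam : ℝ) :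
    x ⬝ᵥ ((q • (vecMulVec μ₁ μ₁ + lam • vecMulVec μ₂ μ₂)) *ᵥ y) =
      q * ((μ₁ ⬝ᵥ x) * (μ₁ ⬝ᵥ y) + lam * ((μ₂ ⬝ᵥ x) * (μ₂ ⬝ᵥ y))) := by
  simp only [smul_mulVec, add_mulVec, vecMulVec_mulVec, op_smul_eq_smul, dotProduct_smul,
    dotProduct_add, smul_eq_mul, dotProduct_comm x μ₁, dotProduct_comm x μ₂]
  ring

lemma mul_max_sign_mul_zero_s11 {t : ℝ} (ht : 0 ≤ t) (c : ℝ) :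
    t * max (sign t * c) 0 = t * max c 0 := by
  rcases ht.eq_or_lt with rfl | ht
  · simp
  · rw [sign_of_pos ht, one_mul]

lemma sum_mul_max_sign_mul_zero_s11 {ι : Type*} [Fintype ι] [DecidableEq ι] {a : ι → ℝ}
    {A : Finset ι} {t : ℝ} (ht : 0 ≤ t) (hA : #Aᶜ = #A) (ha : ∀ i ∈ A, a i = t)
    (ha' : ∀ i ∉ A, a i = -t) (c : ℝ) :
    ∑ i, a i * max (sign (a i) * c) 0 = #A * t * c := by
  have h₁ : ∀ i ∈ A, a i * max (sign (a i) * c) 0 = t * max c 0 := fun i hi => by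
    rw [ha i hi, mul_max_sign_mul_zero_s11 ht]
  have h₂ : ∀ i ∈ Aᶜ, a i * max (sign (a i) * c) 0 = -(t * max (-c) 0) := fun i hi => by
    rw [ha' i (mem_compl.mp hi), sign_neg, neg_mul, neg_mul, ← mul_neg (sign t),
      mul_max_sign_mul_zero_s11 ht]
  rw [← sum_add_sum_compl A, sum_congr rfl h₁, sum_congr rfl h₂, sum_const, sum_const, hA,
    nsmul_eq_mul, nsmul_eq_mul]
  linear_combination (#A * t : ℝ) * max_zero_sub_max_neg_zero_eq_self c

lemma sum_mul_max_sign_mul_zero_of_even {m : ℕ} (hme : Even m) {a : Fin m → ℝ}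
    {A : Finset (Fin m)} (hA : #A = m / 2) (haA : ∀ i ∈ A, a i = 1 / √m)
    (haA' : ∀ i ∉ A, a i = -(1 / √m)) (c : ℝ) :
    ∑ i, a i * max (sign (a i) * c) 0 = √m / 2 * c := by
  have hAc : #Aᶜ = #A := by
    obtain ⟨k, hk⟩ := hme
    rw [card_compl, Fintype.card_fin, hA]
    omega
  rw [sum_mul_max_sign_mul_zero_s11 (by positivity) hAc haA haA', hA,
    Nat.cast_div_charZero (even_iff_two_dvd.mp hme)]
  calc (m : ℝ) / 2 * (1 / √m) * c = m / √m / 2 * c := by ring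
    _ = √m / 2 * c := by rw [div_sqrt]

theorem transformer_output_merged_two_tasks_general {d P m M : ℕ}
    (hme : Even m)
    (μ₁ μ₂ : Fin d → ℝ) (α : ℝ)
    (hμ₁ : μ₁ ⬝ᵥ μ₁ = 1) (hα : μ₁ ⬝ᵥ μ₂ = α)
    (v : Fin M → Fin d → ℝ)
    (hvμ₁ : ∀ k, μ₁ ⬝ᵥ v k = 0) (hvμ₂ : ∀ k, μ₂ ⬝ᵥ v k = 0)
    (s₁ s₂ : ℕ) (S₁ S₂ : Finset (Fin P)) (hdisj : Disjoint S₁ S₂)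
    (hS₁ : S₁.card = s₁) (hS₂ : S₂.card = s₂)
    (X : Matrix (Fin d) (Fin P) ℝ)
    (hX₁ : ∀ l ∈ S₁, colVec X l = μ₁)
    (hX₂ : ∀ l ∈ S₂, colVec X l = -μ₁)
    (hX₃ : ∀ l : Fin P, l ∉ S₁ → l ∉ S₂ → ∃ k : Fin M, colVec X l = v k)
    (a : Fin m → ℝ) (A : Finset (Fin m)) (hA : A.card = m / 2)
    (haA : ∀ i ∈ A, a i = 1 / Real.sqrt m)
    (haA' : ∀ i ∉ A, a i = -(1 / Real.sqrt m))
    (θ : ℝ) (q : ℝ) (lam : ℝ)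
    (V : Matrix (Fin m) (Fin d) ℝ)
    (hV : ∀ i k, V i k = Real.sign (a i) * θ * (μ₁ k + lam * μ₂ k))
    (W : Matrix (Fin d) (Fin d) ℝ)
    (hW : W = q • (vecMulVec μ₁ μ₁ + lam • vecMulVec μ₂ μ₂)) :
    transformer a V W X =
      ((1 + lam * α) * θ * Real.sqrt m / (2 * (P : ℝ))) *
        ((s₁ : ℝ) *
            (((s₁ : ℝ) * Real.exp (q * (1 + lam * α ^ 2))
                - (s₂ : ℝ) * Real.exp (-(q * (1 + lam * α ^ 2)))) /
              ((s₁ : ℝ) * Real.exp (q * (1 + lam * α ^ 2))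
                + (s₂ : ℝ) * Real.exp (-(q * (1 + lam * α ^ 2)))
                + ((P : ℝ) - (s₁ : ℝ) - (s₂ : ℝ)))) +
         (s₂ : ℝ) *
            (((s₁ : ℝ) * Real.exp (-(q * (1 + lam * α ^ 2)))
                - (s₂ : ℝ) * Real.exp (q * (1 + lam * α ^ 2))) /
              ((s₁ : ℝ) * Real.exp (-(q * (1 + lam * α ^ 2)))
                + (s₂ : ℝ) * Real.exp (q * (1 + lam * α ^ 2))
                + ((P : ℝ) - (s₁ : ℝ) - (s₂ : ℝ)))) +
         ((P : ℝ) - (s₁ : ℝ) - (s₂ : ℝ)) * ((s₁ : ℝ) - (s₂ : ℝ)) / (P : ℝ)) := by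
  subst hS₁ hS₂
  set g := signedIndicator S₁ S₂
  set Q := q * (1 + lam * α ^ 2)
  have hlabel (ν : Fin d → ℝ) (hν : ∀ k, ν ⬝ᵥ v k = 0) (s : Fin P) :
      ν ⬝ᵥ colVec X s = (ν ⬝ᵥ μ₁) * g s :=
    dotProduct_eq_mul_signedIndicator hX₁ hX₂ (fun r h₁ h₂ => by
      obtain ⟨k, hk⟩ := hX₃ r h₁ h₂
      rw [hk, hν]) s
  have hscore (s l : Fin P) : colVec X s ⬝ᵥ (W *ᵥ colVec X l) = Q * (g s * g l) := by
    rw [hW, dotProduct_smul_add_vecMulVec_mulVec, hlabel μ₁ hvμ₁, hlabel μ₁ hvμ₁,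
      hlabel μ₂ hvμ₂, hlabel μ₂ hvμ₂, hμ₁, dotProduct_comm, hα]
    ring
  set ν := μ₁ + lam • μ₂ with hν
  have hνv (k : Fin M) : ν ⬝ᵥ v k = 0 := by
    rw [hν, add_dotProduct, smul_dotProduct, hvμ₁, hvμ₂, smul_zero, add_zero]
  have hνμ₁ : ν ⬝ᵥ μ₁ = 1 + lam * α := by
    rw [hν, add_dotProduct, smul_dotProduct, hμ₁, dotProduct_comm, hα, smul_eq_mul]
  have hreadout (l : Fin P) : V *ᵥ ∑ s, attnWeight X W s l • colVec X s =
      fun i => sign (a i) * (θ * ((1 + lam * α) * softmaxMeanLabel #S₁ #S₂ P Q (g l))) := by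
    rw [mulVec_eq_of_apply_eq_mul (ν := ν) hV,
      dotProduct_sum_attnWeight_smul hdisj hscore (hlabel _ hνv), hνμ₁]
    simp only [mul_assoc, g]
  unfold transformer
  simp only [hreadout, sum_mul_max_sign_mul_zero_of_even hme hA haA haA']
  rw [sum_comp_signedIndicator hdisj
    (fun t => √m / 2 * (θ * ((1 + lam * α) * softmaxMeanLabel #S₁ #S₂ P Q t))),
    softmaxMeanLabel_zero, Fintype.card_fin]
  simp only [softmaxMeanLabel, mul_one, mul_neg_one, neg_neg]
  ring

/-- exact output of the idealized merged model
`Ψ⁰ + ΔΨ₁ + λΔΨ₂` (attention `W = q(μ₁μ₁ᵀ + λμ₂μ₂ᵀ)`, MLP rows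
`sign(aᵢ)·θ·(μ₁ + λμ₂)ᵀ`, `μ₁ᵀμ₂ = α`) on a task-`T₁` sample with `s₁`
columns `μ₁` and `s₂` columns `−μ₁`: the effective margin factor is `1 + λα`
and the effective attention score is `Q = q(1 + λα²)`. -/
theorem transformer_output_merged_two_tasks {d P m M : ℕ}
    (hd : 1 ≤ d) (hP : 1 ≤ P) (hm : 2 ≤ m) (hme : Even m) (hM : 1 ≤ M)
    (μ₁ μ₂ : Fin d → ℝ) (α : ℝ)
    (hμ₁ : μ₁ ⬝ᵥ μ₁ = 1) (hμ₂ : μ₂ ⬝ᵥ μ₂ = 1) (hα : μ₁ ⬝ᵥ μ₂ = α)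
    (v : Fin M → Fin d → ℝ) (hv : ∀ k, v k ⬝ᵥ v k = 1)
    (hvμ₁ : ∀ k, μ₁ ⬝ᵥ v k = 0) (hvμ₂ : ∀ k, μ₂ ⬝ᵥ v k = 0)
    (s₁ s₂ : ℕ) (S₁ S₂ : Finset (Fin P)) (hdisj : Disjoint S₁ S₂)
    (hS₁ : S₁.card = s₁) (hS₂ : S₂.card = s₂)
    (X : Matrix (Fin d) (Fin P) ℝ)
    (hX₁ : ∀ l ∈ S₁, colVec X l = μ₁)
    (hX₂ : ∀ l ∈ S₂, colVec X l = -μ₁)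
    (hX₃ : ∀ l : Fin P, l ∉ S₁ → l ∉ S₂ → ∃ k : Fin M, colVec X l = v k)
    (a : Fin m → ℝ) (A : Finset (Fin m)) (hA : A.card = m / 2)
    (haA : ∀ i ∈ A, a i = 1 / Real.sqrt m)
    (haA' : ∀ i ∉ A, a i = -(1 / Real.sqrt m))
    (θ : ℝ) (hθ : 0 < θ) (q : ℝ) (hq : 0 ≤ q) (lam : ℝ)
    (V : Matrix (Fin m) (Fin d) ℝ)
    (hV : ∀ i k, V i k = Real.sign (a i) * θ * (μ₁ k + lam * μ₂ k))
    (W : Matrix (Fin d) (Fin d) ℝ)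
    (hW : W = q • (vecMulVec μ₁ μ₁ + lam • vecMulVec μ₂ μ₂)) :
    transformer a V W X =
      ((1 + lam * α) * θ * Real.sqrt m / (2 * (P : ℝ))) *
        ((s₁ : ℝ) *
            (((s₁ : ℝ) * Real.exp (q * (1 + lam * α ^ 2))
                - (s₂ : ℝ) * Real.exp (-(q * (1 + lam * α ^ 2)))) /
              ((s₁ : ℝ) * Real.exp (q * (1 + lam * α ^ 2))
                + (s₂ : ℝ) * Real.exp (-(q * (1 + lam * α ^ 2)))
                + ((P : ℝ) - (s₁ : ℝ) - (s₂ : ℝ)))) +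
         (s₂ : ℝ) *
            (((s₁ : ℝ) * Real.exp (-(q * (1 + lam * α ^ 2)))
                - (s₂ : ℝ) * Real.exp (q * (1 + lam * α ^ 2))) /
              ((s₁ : ℝ) * Real.exp (-(q * (1 + lam * α ^ 2)))
                + (s₂ : ℝ) * Real.exp (q * (1 + lam * α ^ 2))
                + ((P : ℝ) - (s₁ : ℝ) - (s₂ : ℝ)))) +
         ((P : ℝ) - (s₁ : ℝ) - (s₂ : ℝ)) * ((s₁ : ℝ) - (s₂ : ℝ)) / (P : ℝ)) :=
  transformer_output_merged_two_tasks_general hme μ₁ μ₂ α hμ₁ hα v hvμ₁ hvμ₂ s₁ s₂ S₁ S₂ hdisj hS₁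
    hS₂ X hX₁ hX₂ hX₃ a A hA haA haA' θ q lam V hV W hW
end
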